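/- Let 0 < μ < 1/m_φ, assume F attains a finite minimal value, and let z̄ be a local minimizer of F_μ: there is r > 0 with F_μ(z̄) ≤ F_μ(z) for all z with ‖z − z̄‖ ≤ r. Suppose all subgradients of g are uniformly bounded, i.e., every ξ ∈ ∂g(x) for any x ∈ ℝⁿ satisfies ‖ξ‖ ≤ M_{∂g} for some M_{∂g} ≥ 0, and suppose r > 2μ M_{∂g}. Then F(x_{μφ}(z̄)) ≤ F(x) for every x ∈ ℝⁿ with ‖x − x_{μφ}(z̄)‖ ≤ r − 2μ M_{∂g}. -/

import Mathlib

/-!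
Write `p = x_{μg}(z̄)`. Since `μ⁻¹(z̄ - p) ∈ ∂g(p)`, the envelope `M_{μg}` lies above an affine
function that is exact at `z̄`, while `M_{μφ}(z) ≤ φ(x_{μφ}(z̄)) + ‖x_{μφ}(z̄) - z‖²/(2μ)`.
Hence near `z̄` the local minimality of `F_μ` makes `z̄` a local minimiser of the distance to
`x_{μφ}(z̄) + z̄ - p`, which forces `x_{μφ}(z̄) = p`, and so `‖x_{μφ}(z̄) - z̄‖ ≤ μ M_{∂g}`.
For `x` in the smaller ball pick `ξ ∈ ∂g(x)`: the point `z = x + μξ` lies within `r` of `z̄`, and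
`F(x_{μφ}(z̄)) ≤ F_μ(z̄) ≤ F_μ(z) ≤ F(x)`, the last step because `x = x_{μg}(z)`.
-/

open scoped RealInnerProductSpace

noncomputable section

/-- `ℝⁿ` with the Euclidean norm. -/
abbrev En (n : ℕ) := EuclideanSpace ℝ (Fin n)

/-- `φ` is proper: finite somewhere and never `⊥`. -/
def ProperE {n : ℕ} (φ : En n → EReal) : Prop :=
  (∃ x, φ x ≠ ⊤) ∧ ∀ x, φ x ≠ ⊥

/-- `φ` is `m`-weakly convex: `x ↦ φ x + (m/2)‖x‖²` is convex. -/
def WeaklyConvexOn {n : ℕ} (φ : En n → EReal) (m : ℝ) : Prop :=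
  ∀ x y : En n, ∀ a b : ℝ, 0 ≤ a → 0 ≤ b → a + b = 1 →
    φ (a • x + b • y) + (((m / 2) * ‖a • x + b • y‖ ^ 2 : ℝ) : EReal) ≤
      (a : EReal) * (φ x + (((m / 2) * ‖x‖ ^ 2 : ℝ) : EReal)) +
        (b : EReal) * (φ y + (((m / 2) * ‖y‖ ^ 2 : ℝ) : EReal))

/-- `Mφ` is the Moreau envelope of `φ` with parameter `μ` and `xφ` the associated
(unique) proximal mapping. -/
def IsMoreau {n : ℕ} (φ : En n → EReal) (μ : ℝ) (Mφ : En n → ℝ) (xφ : En n → En n) : Prop :=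
  ∀ z : En n,
    (Mφ z : EReal) = φ (xφ z) + ((‖xφ z - z‖ ^ 2 / (2 * μ) : ℝ) : EReal) ∧
    (∀ x, (Mφ z : EReal) ≤ φ x + ((‖x - z‖ ^ 2 / (2 * μ) : ℝ) : EReal)) ∧
    (∀ x, φ x + ((‖x - z‖ ^ 2 / (2 * μ) : ℝ) : EReal) = (Mφ z : EReal) → x = xφ z)

/-- Real-valued version, for the convex function `g`. -/
def IsMoreauR {n : ℕ} (g : En n → ℝ) (μ : ℝ) (Mg : En n → ℝ) (xg : En n → En n) : Prop :=
  ∀ z : En n,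
    Mg z = g (xg z) + ‖xg z - z‖ ^ 2 / (2 * μ) ∧
    (∀ x, Mg z ≤ g x + ‖x - z‖ ^ 2 / (2 * μ)) ∧
    (∀ x, g x + ‖x - z‖ ^ 2 / (2 * μ) = Mg z → x = xg z)

/-- `ξ ∈ ∂g(x)` for a (finite-valued) convex function `g`. -/
def ConvexSubgradAt {n : ℕ} (g : En n → ℝ) (ξ x : En n) : Prop :=
  ∀ y, g x + ⟪ξ, y - x⟫ ≤ g y

/-- `ξ ∈ ∂φ(x)` for an `m`-weakly convex `φ`: `ξ + m x` is a subgradient of the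
convex function `φ + (m/2)‖·‖²` at `x`. -/
def WeakSubgradAt {n : ℕ} (φ : En n → EReal) (m : ℝ) (ξ x : En n) : Prop :=
  ∀ y, φ x + (((m / 2) * ‖x‖ ^ 2 + ⟪ξ + m • x, y - x⟫ : ℝ) : EReal) ≤
    φ y + (((m / 2) * ‖y‖ ^ 2 : ℝ) : EReal)

open Set Filter Topology

theorem ConvexOn.exists_dual_subgradient {E : Type*} [NormedAddCommGroup E] [NormedSpace ℝ E]
    {g : E → ℝ} (hg : ConvexOn ℝ univ g) (hgc : Continuous g) (x : E) :
    ∃ ℓ : StrongDual ℝ E, ∀ y, g x + ℓ (y - x) ≤ g y := by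
  have hopen : IsOpen {p : E × ℝ | p.1 ∈ univ ∧ g p.1 < p.2} := by
    simpa using isOpen_lt (hgc.comp continuous_fst) continuous_snd
  obtain ⟨f, hf⟩ := geometric_hahn_banach_open_point hg.convex_strict_epigraph hopen
    (x := (x, g x)) fun h => lt_irrefl _ h.2
  have hsplit : ∀ y t, f (y, t) = f (y, 0) + t * f (0, 1) := fun y t => by
    rw [← smul_eq_mul, ← map_smul, ← map_add, Prod.smul_mk, smul_zero, smul_eq_mul, mul_one,
      Prod.mk_add_mk, add_zero, zero_add]
  have hc : f (0, 1) < 0 := by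
    have := hf (x, g x + 1) ⟨trivial, lt_add_one _⟩
    rw [hsplit x (g x + 1), hsplit x (g x)] at this
    linarith
  refine ⟨(-f (0, 1))⁻¹ • f.comp (ContinuousLinearMap.inl ℝ E ℝ), fun y => ?_⟩
  refine le_of_forall_pos_le_add fun ε hε => ?_
  have hy := hf (y, g y + ε) ⟨trivial, lt_add_of_pos_right _ hε⟩
  rw [hsplit y (g y + ε), hsplit x (g x)] at hy
  have hℓ : ((-f (0, 1))⁻¹ • f.comp (ContinuousLinearMap.inl ℝ E ℝ)) (y - x)
      = (f (y, 0) - f (x, 0)) / -f (0, 1) := by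
    simp [div_eq_inv_mul, ← map_sub]
  have : (f (y, 0) - f (x, 0)) / -f (0, 1) ≤ g y + ε - g x := by
    rw [div_le_iff₀ (neg_pos.2 hc)]
    linarith
  linarith

theorem EReal.eq_coe_sub_of_coe_eq_add {a : EReal} {m c : ℝ} (h : (m : EReal) = a + c) :
    a = ((m - c : ℝ) : EReal) := by
  induction a using EReal.rec with
  | bot => simp at h
  | top => simp at h
  | coe a =>
    norm_cast at h ⊢
    linarith

theorem eq_of_forall_norm_sub_le {E : Type*} [NormedAddCommGroup E] [NormedSpace ℝ E]
    {z₀ c : E} {r : ℝ} (hr : 0 < r) (h : ∀ z, ‖z - z₀‖ ≤ r → ‖z₀ - c‖ ≤ ‖z - c‖) :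
    z₀ = c := by
  by_contra hne
  have hd : 0 < ‖z₀ - c‖ := norm_pos_iff.2 (sub_ne_zero.2 hne)
  set t := min 1 (r / ‖z₀ - c‖)
  have ht : 0 < t := lt_min one_pos (div_pos hr hd)
  have hz := h (z₀ - t • (z₀ - c)) <| by
    rw [sub_sub_cancel_left, norm_neg, norm_smul, Real.norm_of_nonneg ht.le,
      ← le_div_iff₀ hd]
    exact min_le_right _ _
  rw [show z₀ - t • (z₀ - c) - c = (1 - t) • (z₀ - c) by module, norm_smul,
    Real.norm_of_nonneg (sub_nonneg.2 (min_le_left _ _))] at hz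
  nlinarith

theorem norm_sub_sq_sub_norm_sub_sq {E : Type*} [NormedAddCommGroup E] [InnerProductSpace ℝ E]
    (a b x v : E) :
    ‖a - (x + v)‖ ^ 2 - ‖b - (x + v)‖ ^ 2 = ‖x - a‖ ^ 2 - ‖x - b‖ ^ 2 - 2 * ⟪v, a - b⟫ := by
  simp only [← real_inner_self_eq_norm_sq, inner_sub_left, inner_sub_right, inner_add_left,
    inner_add_right, real_inner_comm]
  ring

theorem ConvexOn.exists_convexSubgradAt {n : ℕ} {g : En n → ℝ} (hg : ConvexOn ℝ univ g)
    (x : En n) : ∃ ξ, ConvexSubgradAt g ξ x := by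
  obtain ⟨ℓ, hℓ⟩ := hg.exists_dual_subgradient
    (continuousOn_univ.1 (hg.continuousOn isOpen_univ)) x
  exact ⟨(InnerProductSpace.toDual ℝ (En n)).symm ℓ, fun y => by
    simpa [InnerProductSpace.toDual_symm_apply] using hℓ y⟩

namespace IsMoreau

variable {n : ℕ} {φ : En n → EReal} {μ : ℝ} {Mφ : En n → ℝ} {xφ : En n → En n}

theorem apply_prox (h : IsMoreau φ μ Mφ xφ) (z : En n) :
    φ (xφ z) = ((Mφ z - ‖xφ z - z‖ ^ 2 / (2 * μ) : ℝ) : EReal) :=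
  EReal.eq_coe_sub_of_coe_eq_add (h z).1

theorem le_of_apply_eq (h : IsMoreau φ μ Mφ xφ) {x : En n} {b : ℝ} (hx : φ x = b) (z : En n) :
    Mφ z ≤ b + ‖x - z‖ ^ 2 / (2 * μ) := by
  have := (h z).2.1 x
  rw [hx] at this
  exact_mod_cast this

end IsMoreau

namespace IsMoreauR

variable {n : ℕ} {g : En n → ℝ} {μ : ℝ} {Mg : En n → ℝ} {xg : En n → En n}

theorem convexSubgradAt_prox (h : IsMoreauR g μ Mg xg) (hg : ConvexOn ℝ univ g) (hμ : 0 < μ)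
    (z : En n) : ConvexSubgradAt g (μ⁻¹ • (z - xg z)) (xg z) := by
  intro y
  set p := xg z
  have hslope : ∀ t ∈ Ioc (0 : ℝ) 1,
      g p + ⟪μ⁻¹ • (z - p), y - p⟫ ≤ g y + t * (‖y - p‖ ^ 2 / (2 * μ)) := by
    rintro t ⟨ht0, ht1⟩
    have hconv : g (p + t • (y - p)) ≤ (1 - t) * g p + t * g y := by
      simpa [show (1 - t) • p + t • y = p + t • (y - p) by module] using
        hg.2 (mem_univ p) (mem_univ y) (sub_nonneg.2 ht1) ht0.le (sub_add_cancel 1 t)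
    have hmin := (h z).2.1 (p + t • (y - p))
    rw [(h z).1, show p + t • (y - p) - z = (p - z) + t • (y - p) by abel, norm_add_sq_real,
      inner_smul_right, norm_smul, Real.norm_of_nonneg ht0.le] at hmin
    rw [real_inner_smul_left, ← neg_sub p z, inner_neg_left]
    have key : t * (g p + μ⁻¹ * -⟪p - z, y - p⟫) ≤ t * (g y + t * (‖y - p‖ ^ 2 / (2 * μ))) := by
      field_simp at hmin ⊢
      nlinarith
    exact le_of_mul_le_mul_left key ht0
  have hlim : Tendsto (fun t : ℝ => g y + t * (‖y - p‖ ^ 2 / (2 * μ))) (𝓝[>] 0) (𝓝 (g y)) := by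
    simpa using ((tendsto_id.mul_const _).const_add (g y)).mono_left
      (nhdsWithin_le_nhds (a := (0 : ℝ)))
  exact ge_of_tendsto hlim (by filter_upwards [Ioc_mem_nhdsGT one_pos] using hslope)

theorem add_inner_sub_le_of_convexSubgradAt (h : IsMoreauR g μ Mg xg) (hμ : 0 < μ)
    {ξ p : En n} (hξ : ConvexSubgradAt g ξ p) (z : En n) :
    g p + ⟪ξ, z - p⟫ - μ / 2 * ‖ξ‖ ^ 2 ≤ Mg z := by
  have hyoung : ⟪ξ, z - xg z⟫ ≤ ‖xg z - z‖ ^ 2 / (2 * μ) + μ / 2 * ‖ξ‖ ^ 2 := by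
    have := real_inner_le_norm ξ (z - xg z)
    rw [norm_sub_rev] at this
    rw [div_add' _ _ _ (by positivity), le_div_iff₀ (by positivity)]
    nlinarith [sq_nonneg (‖xg z - z‖ - μ * ‖ξ‖), norm_nonneg ξ]
  have := hξ (xg z)
  rw [(h z).1]
  have hsplit : ⟪ξ, z - p⟫ = ⟪ξ, xg z - p⟫ + ⟪ξ, z - xg z⟫ := by
    rw [← inner_add_right, sub_add_sub_cancel']
  linarith

theorem norm_prox_sub_le (h : IsMoreauR g μ Mg xg) (hg : ConvexOn ℝ univ g) (hμ : 0 < μ)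
    {M : ℝ} (hbnd : ∀ x ξ : En n, ConvexSubgradAt g ξ x → ‖ξ‖ ≤ M) (z : En n) :
    ‖xg z - z‖ ≤ μ * M := by
  have := hbnd _ _ (h.convexSubgradAt_prox hg hμ z)
  rwa [norm_smul, norm_inv, Real.norm_of_nonneg hμ.le, norm_sub_rev, inv_mul_le_iff₀ hμ] at this

end IsMoreauR

section DC

variable {n : ℕ} {φ : En n → EReal} {g : En n → ℝ} {μ : ℝ} {Mφ Mg : En n → ℝ}
  {xφ xg : En n → En n}

theorem prox_eq_prox_of_local_min (hφ : IsMoreau φ μ Mφ xφ) (hgprox : IsMoreauR g μ Mg xg)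
    (hg : ConvexOn ℝ univ g) (hμ : 0 < μ) {zbar : En n} {r : ℝ} (hr : 0 < r)
    (hloc : ∀ z : En n, ‖z - zbar‖ ≤ r → Mφ zbar - Mg zbar ≤ Mφ z - Mg z) :
    xφ zbar = xg zbar := by
  set xb := xφ zbar
  set p := xg zbar
  have hlin : ∀ z, Mg zbar + μ⁻¹ * ⟪zbar - p, z - zbar⟫ ≤ Mg z := by
    intro z
    have :=
      hgprox.add_inner_sub_le_of_convexSubgradAt hμ (hgprox.convexSubgradAt_prox hg hμ zbar) z
    rw [(hgprox zbar).1, norm_sub_rev]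
    rw [real_inner_smul_left, norm_smul, norm_inv, Real.norm_of_nonneg hμ.le,
      show z - p = (z - zbar) + (zbar - p) by abel, inner_add_right,
      real_inner_self_eq_norm_sq] at this
    field_simp at this ⊢
    linarith
  have hclose : ∀ z, ‖z - zbar‖ ≤ r → ‖zbar - (xb + (zbar - p))‖ ≤ ‖z - (xb + (zbar - p))‖ := by
    intro z hz
    have key : ‖xb - zbar‖ ^ 2 / (2 * μ) - ‖xb - z‖ ^ 2 / (2 * μ)
        + μ⁻¹ * ⟪zbar - p, z - zbar⟫ ≤ 0 := by
      linarith [hloc z hz, hφ.le_of_apply_eq (hφ.apply_prox zbar) z, hlin z]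
    rw [← sq_le_sq₀ (norm_nonneg _) (norm_nonneg _), ← sub_nonneg, norm_sub_sq_sub_norm_sub_sq]
    field_simp at key
    linarith
  have hz := eq_of_forall_norm_sub_le hr hclose
  rwa [add_sub_left_comm, left_eq_add, sub_eq_zero] at hz

theorem apply_prox_sub_le (hφ : IsMoreau φ μ Mφ xφ) (hgprox : IsMoreauR g μ Mg xg) (z : En n) :
    φ (xφ z) - (g (xφ z) : EReal) ≤ ((Mφ z - Mg z : ℝ) : EReal) := by
  rw [hφ.apply_prox, ← EReal.coe_sub, EReal.coe_le_coe_iff]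
  linarith [(hgprox z).2.1 (xφ z)]

theorem moreau_sub_le_of_convexSubgradAt (hφ : IsMoreau φ μ Mφ xφ) (hgprox : IsMoreauR g μ Mg xg)
    (hμ : 0 < μ) {ξ x : En n} (hξ : ConvexSubgradAt g ξ x) :
    ((Mφ (x + μ • ξ) - Mg (x + μ • ξ) : ℝ) : EReal) ≤ φ x - (g x : EReal) := by
  induction hx : φ x using EReal.rec with
  | bot =>
    have := (hφ (x + μ • ξ)).2.1 x
    simp [hx] at this
  | top => simp
  | coe b =>
    have h1 := hφ.le_of_apply_eq hx (x + μ • ξ)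
    have h2 := hgprox.add_inner_sub_le_of_convexSubgradAt hμ hξ (x + μ • ξ)
    rw [← EReal.coe_sub, EReal.coe_le_coe_iff]
    simp only [sub_add_cancel_left, add_sub_cancel_left, norm_neg, norm_smul, inner_smul_right,
      real_inner_self_eq_norm_sq, Real.norm_of_nonneg hμ.le] at h1 h2
    field_simp at h1
    nlinarith

end DC

theorem stmt8_general {n : ℕ} (φ : En n → EReal) (g : En n → ℝ) (μ : ℝ)
    (hg : ConvexOn ℝ Set.univ g)
    (hμ : 0 < μ)
    (Mφ : En n → ℝ) (xφ : En n → En n) (hφprox : IsMoreau φ μ Mφ xφ)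
    (Mg : En n → ℝ) (xg : En n → En n) (hgprox : IsMoreauR g μ Mg xg)
    (Mdg : ℝ)
    (hbnd : ∀ x ξ : En n, ConvexSubgradAt g ξ x → ‖ξ‖ ≤ Mdg)
    (zbar : En n) (r : ℝ) (hr : 0 < r)
    (hloc : ∀ z : En n, ‖z - zbar‖ ≤ r → Mφ zbar - Mg zbar ≤ Mφ z - Mg z) :
    ∀ x : En n, ‖x - xφ zbar‖ ≤ r - 2 * μ * Mdg →
      φ (xφ zbar) - ((g (xφ zbar) : ℝ) : EReal) ≤ φ x - ((g x : ℝ) : EReal) := by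
  intro x hx
  obtain ⟨ξ, hξ⟩ := hg.exists_convexSubgradAt x
  have hxb : ‖xφ zbar - zbar‖ ≤ μ * Mdg := by
    rw [prox_eq_prox_of_local_min hφprox hgprox hg hμ hr hloc]
    exact hgprox.norm_prox_sub_le hg hμ hbnd zbar
  have hμξ : ‖μ • ξ‖ ≤ μ * Mdg := by
    rw [norm_smul, Real.norm_of_nonneg hμ.le]
    exact mul_le_mul_of_nonneg_left (hbnd x ξ hξ) hμ.le
  have hz : ‖x + μ • ξ - zbar‖ ≤ r :=
    calc ‖x + μ • ξ - zbar‖ = ‖(x - xφ zbar) + (xφ zbar - zbar) + μ • ξ‖ := by congr 1; abel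
      _ ≤ ‖x - xφ zbar‖ + ‖xφ zbar - zbar‖ + ‖μ • ξ‖ := norm_add₃_le
      _ ≤ r := by linarith
  calc φ (xφ zbar) - ((g (xφ zbar) : ℝ) : EReal) ≤ ((Mφ zbar - Mg zbar : ℝ) : EReal) :=
        apply_prox_sub_le hφprox hgprox zbar
    _ ≤ ((Mφ (x + μ • ξ) - Mg (x + μ • ξ) : ℝ) : EReal) := EReal.coe_le_coe_iff.2 (hloc _ hz)
    _ ≤ φ x - ((g x : ℝ) : EReal) := moreau_sub_le_of_convexSubgradAt hφprox hgprox hμ hξ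

/-- if `z̄` is a local minimizer of `F_μ` on the ball of radius
`r > 2μ M_{∂g}` and all subgradients of `g` are bounded by `M_{∂g}`, then
`x_{μφ}(z̄)` minimizes `F` on the ball of radius `r - 2μ M_{∂g}`. -/
theorem stmt8 {n : ℕ} (φ : En n → EReal) (g : En n → ℝ) (mφ μ : ℝ)
    (hproper : ProperE φ) (hlsc : LowerSemicontinuous φ)
    (hmφ : 0 ≤ mφ) (hweak : WeaklyConvexOn φ mφ)
    (hg : ConvexOn ℝ Set.univ g)
    (hμ : 0 < μ) (hμm : μ * mφ < 1)
    (Fstar : ℝ)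
    (hmin : ∃ xs : En n, φ xs - ((g xs : ℝ) : EReal) = (Fstar : EReal) ∧
      ∀ x, (Fstar : EReal) ≤ φ x - ((g x : ℝ) : EReal))
    (Mφ : En n → ℝ) (xφ : En n → En n) (hφprox : IsMoreau φ μ Mφ xφ)
    (Mg : En n → ℝ) (xg : En n → En n) (hgprox : IsMoreauR g μ Mg xg)
    (Mdg : ℝ) (hMdg : 0 ≤ Mdg)
    (hbnd : ∀ x ξ : En n, ConvexSubgradAt g ξ x → ‖ξ‖ ≤ Mdg)
    (zbar : En n) (r : ℝ) (hr : 0 < r) (hr2 : 2 * μ * Mdg < r)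
    (hloc : ∀ z : En n, ‖z - zbar‖ ≤ r → Mφ zbar - Mg zbar ≤ Mφ z - Mg z) :
    ∀ x : En n, ‖x - xφ zbar‖ ≤ r - 2 * μ * Mdg →
      φ (xφ zbar) - ((g (xφ zbar) : ℝ) : EReal) ≤ φ x - ((g x : ℝ) : EReal) :=
  stmt8_general φ g μ hg hμ Mφ xφ hφprox Mg xg hgprox Mdg hbnd zbar r hr hloc
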